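/- Vanishing of the normalized partial sums of powers of a covariance sequence. Let q ≥ 2 be an integer, let r be an integer with 1 ≤ r ≤ q − 1, and let ρ : ℤ → ℝ be such that Σ_{k∈ℤ} |ρ(k)|^q < ∞. Then n^{−(q−r)/q} · Σ_{|i|<n} |ρ(i)|^r → 0 as n → ∞. -/

import Mathlib

open Filter Finset Real

/-! Split the sum over `|i| < n` at a finite set `t` outside which `∑ |ρ i| ^ q` is small. The
part over `t` is a constant, killed by the factor `n ^ (-(q - r) / q)`. On the rest, Hölder's
inequality with exponents `q / r` and `q / (q - r)` bounds `∑ |ρ i| ^ r` by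
`(2n) ^ ((q - r) / q)` times the `(r / q)`-th power of the tail, so after normalization that part
is at most `2 ^ ((q - r) / q)` times a small quantity. -/

theorem Real.sum_le_card_rpow_mul_sum_rpow_of_nonneg {ι : Type*} (s : Finset ι) {f : ι → ℝ}
    {p q : ℝ} (hpq : p.HolderConjugate q) (hf : ∀ i ∈ s, 0 ≤ f i) :
    ∑ i ∈ s, f i ≤ (#s : ℝ) ^ q⁻¹ * (∑ i ∈ s, f i ^ p) ^ p⁻¹ := by
  have := inner_le_Lp_mul_Lq_of_nonneg s hpq hf (g := 1) (fun _ _ => zero_le_one)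
  simpa [Real.one_rpow, mul_comm] using this

theorem Real.sum_le_sum_add_card_rpow_mul_sum_sdiff_rpow {ι : Type*} [DecidableEq ι]
    (s t : Finset ι) {f : ι → ℝ} {p q : ℝ} (hpq : p.HolderConjugate q) (hf : ∀ i, 0 ≤ f i) :
    ∑ i ∈ s, f i ≤ ∑ i ∈ t, f i + (#s : ℝ) ^ q⁻¹ * (∑ i ∈ s \ t, f i ^ p) ^ p⁻¹ := by
  rw [← sum_inter_add_sum_sdiff s t]
  gcongr ?_ + ?_
  · exact sum_le_sum_of_subset_of_nonneg inter_subset_right fun i _ _ => hf i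
  · calc ∑ i ∈ s \ t, f i ≤ (#(s \ t) : ℝ) ^ q⁻¹ * (∑ i ∈ s \ t, f i ^ p) ^ p⁻¹ :=
          sum_le_card_rpow_mul_sum_rpow_of_nonneg _ hpq fun i _ => hf i
      _ ≤ (#s : ℝ) ^ q⁻¹ * (∑ i ∈ s \ t, f i ^ p) ^ p⁻¹ := by
          gcongr
          · exact rpow_nonneg (sum_nonneg fun i _ => rpow_nonneg (hf i) p) _
          · exact hpq.symm.inv_nonneg
          · exact sdiff_subset

theorem Real.rpow_neg_mul_card_rpow_le {ι : Type*} (s : Finset ι) {c n : ℕ} (hn : 0 < n)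
    (hs : #s ≤ c * n) {x : ℝ} (hx : 0 ≤ x) :
    (n : ℝ) ^ (-x) * (#s : ℝ) ^ x ≤ (c : ℝ) ^ x := by
  have hn' : (0 : ℝ) < n := by exact_mod_cast hn
  rw [rpow_neg hn'.le, inv_mul_eq_div, ← div_rpow (by positivity) hn'.le]
  gcongr
  rw [div_le_iff₀ hn']
  exact_mod_cast hs

theorem Real.tendsto_rpow_neg_mul_sum_of_summable_rpow {ι : Type*} {f : ι → ℝ} (hf : ∀ i, 0 ≤ f i)
    {p q : ℝ} (hpq : p.HolderConjugate q) (hsum : Summable fun i => f i ^ p)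
    {s : ℕ → Finset ι} {c : ℕ} (hs : ∀ n, #(s n) ≤ c * n) :
    Tendsto (fun n : ℕ => (n : ℝ) ^ (-q⁻¹) * ∑ i ∈ s n, f i) atTop (nhds 0) := by
  classical
  refine Metric.tendsto_nhds.2 fun ε hε => ?_
  have htail_nhds : {x : ℝ | (c : ℝ) ^ q⁻¹ * x ^ p⁻¹ < ε / 2} ∈ nhds 0 := by
    have hcont : ContinuousAt (fun x : ℝ => (c : ℝ) ^ q⁻¹ * x ^ p⁻¹) 0 :=
      continuousAt_const.mul (continuousAt_rpow_const 0 _ (Or.inr hpq.inv_nonneg))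
    exact hcont.preimage_mem_nhds
      (Iio_mem_nhds (by simpa [zero_rpow hpq.inv_pos.ne'] using half_pos hε))
  obtain ⟨t, htail⟩ := summable_iff_vanishing.1 hsum _ htail_nhds
  have hhead : Tendsto (fun n : ℕ => (n : ℝ) ^ (-q⁻¹) * ∑ i ∈ t, f i) atTop (nhds 0) := by
    simpa using ((tendsto_rpow_neg_atTop hpq.symm.inv_pos).comp
      tendsto_natCast_atTop_atTop).mul_const (∑ i ∈ t, f i)
  filter_upwards [hhead.eventually_lt_const (half_pos hε), eventually_gt_atTop 0]
    with n hhead_n hn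
  have hsplit := sum_le_sum_add_card_rpow_mul_sum_sdiff_rpow (s n) t hpq hf
  have htail_n := htail (s n \ t) sdiff_disjoint
  have hcard := rpow_neg_mul_card_rpow_le (s n) hn (hs n) hpq.symm.inv_nonneg
  have hn_pos : (0 : ℝ) ≤ (n : ℝ) ^ (-q⁻¹) := rpow_nonneg n.cast_nonneg _
  rw [dist_zero_right, norm_of_nonneg (mul_nonneg hn_pos (sum_nonneg fun i _ => hf i))]
  calc (n : ℝ) ^ (-q⁻¹) * ∑ i ∈ s n, f i
      ≤ (n : ℝ) ^ (-q⁻¹) * ∑ i ∈ t, f i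
          + (n : ℝ) ^ (-q⁻¹) * (#(s n) : ℝ) ^ q⁻¹ * (∑ i ∈ s n \ t, f i ^ p) ^ p⁻¹ := by
        rw [mul_assoc, ← mul_add]; exact mul_le_mul_of_nonneg_left hsplit hn_pos
    _ ≤ (n : ℝ) ^ (-q⁻¹) * ∑ i ∈ t, f i + (c : ℝ) ^ q⁻¹ * (∑ i ∈ s n \ t, f i ^ p) ^ p⁻¹ := by
        gcongr
        exact rpow_nonneg (sum_nonneg fun i _ => rpow_nonneg (hf i) p) _
    _ < ε / 2 + ε / 2 := add_lt_add hhead_n htail_n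
    _ = ε := add_halves ε

theorem normalized_partial_sums_vanish
    (q r : ℕ) (hr1 : 1 ≤ r) (hr2 : r ≤ q - 1)
    (ρ : ℤ → ℝ) (hsum : Summable (fun k : ℤ => |ρ k| ^ q)) :
    Tendsto (fun n : ℕ =>
        (n : ℝ) ^ (-(((q : ℝ) - r) / q)) *
          ∑ i ∈ Finset.Ioo (-(n : ℤ)) (n : ℤ), |ρ i| ^ r)
      atTop (nhds 0) := by
  have hr : (0 : ℝ) < r := by exact_mod_cast hr1
  have hrq : (r : ℝ) < q := by exact_mod_cast (show r < q by omega)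
  have hq : (0 : ℝ) < q := hr.trans hrq
  have hpq : (1 / ((r : ℝ) / q)).HolderConjugate (1 / (((q : ℝ) - r) / q)) :=
    holderConjugate_one_div (by positivity) (div_pos (by linarith) hq) (by field_simp; ring)
  have hpow (i : ℤ) : (|ρ i| ^ r) ^ (1 / ((r : ℝ) / q)) = |ρ i| ^ q := by
    rw [← rpow_natCast, ← rpow_mul (abs_nonneg _), ← rpow_natCast]
    congr 1
    field_simp
  have hcard (n : ℕ) : #(Ioo (-(n : ℤ)) n) ≤ 2 * n := by
    rw [Int.card_Ioo]; omega
  simpa only [one_div_one_div, one_div, inv_div, hpow] using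
    tendsto_rpow_neg_mul_sum_of_summable_rpow (fun i => pow_nonneg (abs_nonneg (ρ i)) r) hpq
      (by simpa only [hpow] using hsum) hcard
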